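/- arXiv:1311.0417 — 5 statements merged into one kernel-verified Lean document; each statement's English description precedes it below -/
import Mathlib

section
/- Let α > 0 and let F : ℝ → ℝ be continuously differentiable on [0,∞) with F(t) > 0 for all t ≥ 0. Assume that the derivative t ↦ F'(t) is nondecreasing on [0,∞) and that t^α · F(t) → 1 as t → ∞. Then t^{α+1} · (−F'(t)) → α as t → ∞. -/
/-!
Since `F'` is nondecreasing, `F` is convex, so `F' t` lies below the secant slope of `F` over
`[t, c t]` for `c > 1` and above it for `c < 1`. As `t ^ α * F (c * t) → c ^ (-α)`, the rescaled
slope `t ^ (α + 1) * slope F t (c * t)` tends to `(c ^ (-α) - 1) / (c - 1)`, and letting `c → 1`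
squeezes `t ^ (α + 1) * F' t` to the derivative `-α` of `x ↦ x ^ (-α)` at `1`.
-/

open Filter Set Topology

lemma convexOn_of_hasDerivWithinAt_of_monotoneOn {D : Set ℝ} (hD : Convex ℝ D) {f f' : ℝ → ℝ}
    (hf : ∀ x ∈ D, HasDerivWithinAt f (f' x) D x) (hf' : MonotoneOn f' D) :
    ConvexOn ℝ D f := by
  have hderiv : ∀ x ∈ interior D, HasDerivAt f (f' x) x := fun x hx =>
    (hf x (interior_subset hx)).hasDerivAt (mem_interior_iff_mem_nhds.mp hx)
  refine MonotoneOn.convexOn_of_deriv hD (fun x hx => (hf x hx).continuousWithinAt)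
    (fun x hx => (hderiv x hx).differentiableAt.differentiableWithinAt) ?_
  intro x hx y hy hxy
  rw [(hderiv x hx).deriv, (hderiv y hy).deriv]
  exact hf' (interior_subset hx) (interior_subset hy) hxy

lemma tendsto_slope_rpow_one (p : ℝ) :
    Tendsto (slope (fun x : ℝ => x ^ p) 1) (𝓝[≠] 1) (𝓝 p) := by
  have h : HasDerivAt (fun x : ℝ => x ^ p) p 1 := by
    simpa using Real.hasDerivAt_rpow_const (x := 1) (p := p) (Or.inl one_ne_zero)
  exact hasDerivAt_iff_tendsto_slope.mp h

lemma tendsto_rpow_mul_comp_const_mul {α L c : ℝ} {F : ℝ → ℝ}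
    (hlim : Tendsto (fun t : ℝ => t ^ α * F t) atTop (𝓝 L)) (hc : 0 < c) :
    Tendsto (fun t : ℝ => t ^ α * F (c * t)) atTop (𝓝 (c ^ (-α) * L)) := by
  refine ((hlim.comp (tendsto_id.const_mul_atTop hc)).const_mul (c ^ (-α))).congr' ?_
  filter_upwards [eventually_ge_atTop 0] with t ht
  simp only [Function.comp_apply, id, Real.mul_rpow hc.le ht, ← mul_assoc,
    ← Real.rpow_add hc, neg_add_cancel, Real.rpow_zero, one_mul]

lemma tendsto_rpow_mul_slope_comp_const_mul {α L c : ℝ} {F : ℝ → ℝ}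
    (hlim : Tendsto (fun t : ℝ => t ^ α * F t) atTop (𝓝 L)) (hc : 0 < c) (hc1 : c ≠ 1) :
    Tendsto (fun t : ℝ => t ^ (α + 1) * slope F t (c * t)) atTop
      (𝓝 (L * slope (fun x : ℝ => x ^ (-α)) 1 c)) := by
  have hc1' : c - 1 ≠ 0 := sub_ne_zero.mpr hc1
  have h := ((tendsto_rpow_mul_comp_const_mul hlim hc).sub hlim).div_const (c - 1)
  refine (h.congr' ?_).trans_eq ?_
  · filter_upwards [eventually_gt_atTop 0] with t ht
    rw [slope_def_field, Real.rpow_add_one ht.ne', ← sub_one_mul]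
    field_simp
  · rw [slope_def_field, Real.one_rpow]
    congr 1
    ring

lemma tendsto_of_squeeze_of_tendsto_nhdsNE {ι : Type*} {l : Filter ι} {G : ι → ℝ}
    {Q : ℝ → ι → ℝ} {ℓ : ℝ → ℝ} {x₀ a : ℝ}
    (hQ : ∀ᶠ c in 𝓝[≠] x₀, Tendsto (Q c) l (𝓝 (ℓ c))) (hℓ : Tendsto ℓ (𝓝[≠] x₀) (𝓝 a))
    (hlow : ∀ᶠ c in 𝓝[<] x₀, ∀ᶠ t in l, Q c t ≤ G t)
    (hup : ∀ᶠ c in 𝓝[>] x₀, ∀ᶠ t in l, G t ≤ Q c t) :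
    Tendsto G l (𝓝 a) := by
  refine tendsto_order.2 ⟨fun b hb => ?_, fun b hb => ?_⟩
  · obtain ⟨c, hbc, hQc, hle⟩ := ((hℓ.mono_left (nhdsLT_le_nhdsNE x₀)).eventually
      (eventually_gt_nhds hb) |>.and ((hQ.filter_mono (nhdsLT_le_nhdsNE x₀)).and hlow)).exists
    filter_upwards [hQc.eventually (eventually_gt_nhds hbc), hle] with t h1 h2
    exact h1.trans_le h2
  · obtain ⟨c, hbc, hQc, hle⟩ := ((hℓ.mono_left (nhdsGT_le_nhdsNE x₀)).eventually
      (eventually_lt_nhds hb) |>.and ((hQ.filter_mono (nhdsGT_le_nhdsNE x₀)).and hup)).exists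
    filter_upwards [hQc.eventually (eventually_lt_nhds hbc), hle] with t h1 h2
    exact h2.trans_lt h1

theorem asymptotic_derivative_general (α : ℝ) (F F' : ℝ → ℝ)
    (hderiv : ∀ t ∈ Ici (0:ℝ), HasDerivWithinAt F (F' t) (Ici 0) t)
    (hmono : ∀ s ∈ Ici (0:ℝ), ∀ t ∈ Ici (0:ℝ), s ≤ t → F' s ≤ F' t)
    (hlim : Tendsto (fun t : ℝ => t ^ α * F t) atTop (nhds 1)) :
    Tendsto (fun t : ℝ => t ^ (α + 1) * (-F' t)) atTop (nhds α) := by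
  have hconv : ConvexOn ℝ (Ici 0) F :=
    convexOn_of_hasDerivWithinAt_of_monotoneOn (convex_Ici 0) hderiv hmono
  have key : Tendsto (fun t : ℝ => t ^ (α + 1) * F' t) atTop (𝓝 (-α)) := by
    refine tendsto_of_squeeze_of_tendsto_nhdsNE (x₀ := 1)
      (Q := fun c t => t ^ (α + 1) * slope F t (c * t))
      (ℓ := fun c => 1 * slope (fun x : ℝ => x ^ (-α)) 1 c) ?_ ?_ ?_ ?_
    · filter_upwards [self_mem_nhdsWithin, nhdsWithin_le_nhds (eventually_gt_nhds one_pos)]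
        with c hc1 hc0 using tendsto_rpow_mul_slope_comp_const_mul hlim hc0 hc1
    · simpa using tendsto_slope_rpow_one (-α)
    · filter_upwards [Ioo_mem_nhdsLT one_pos] with c hc
      filter_upwards [eventually_gt_atTop 0] with t ht
      have hct : 0 < c * t := mul_pos hc.1 ht
      have h := hconv.slope_le_of_hasDerivWithinAt hct.le ht.le
        (mul_lt_of_lt_one_left ht hc.2) (hderiv t ht.le)
      exact mul_le_mul_of_nonneg_left (slope_comm F t (c * t) ▸ h) (by positivity)
    · filter_upwards [self_mem_nhdsWithin] with c hc
      filter_upwards [eventually_gt_atTop 0] with t ht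
      have hct : t < c * t := lt_mul_left ht hc
      have h := hconv.le_slope_of_hasDerivWithinAt ht.le (ht.trans hct).le hct (hderiv t ht.le)
      exact mul_le_mul_of_nonneg_left h (by positivity)
  simpa only [mul_neg, neg_neg] using key.neg

/-- Lemma 3.5 (Asymptotic derivative): if `F` is continuously differentiable on `[0,∞)`,
positive, with nondecreasing derivative, and `t^α * F t → 1`, then
`t^(α+1) * (-F' t) → α`. -/
theorem asymptotic_derivative (α : ℝ) (hα : 0 < α) (F F' : ℝ → ℝ)
    (hderiv : ∀ t ∈ Ici (0:ℝ), HasDerivWithinAt F (F' t) (Ici 0) t)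
    (hcont : ContinuousOn F' (Ici 0))
    (hpos : ∀ t ∈ Ici (0:ℝ), 0 < F t)
    (hmono : ∀ s ∈ Ici (0:ℝ), ∀ t ∈ Ici (0:ℝ), s ≤ t → F' s ≤ F' t)
    (hlim : Tendsto (fun t : ℝ => t ^ α * F t) atTop (nhds 1)) :
    Tendsto (fun t : ℝ => t ^ (α + 1) * (-F' t)) atTop (nhds α) :=
  asymptotic_derivative_general α F F' hderiv hmono hlim
end

section
/- Let α > 0 and let F : ℝ → ℝ be continuously differentiable on [0,∞) with F(t) > 0 for all t ≥ 0. Assume that the derivative t ↦ F'(t) is nondecreasing on [0,∞) and that t^α · F(t) → 1 as t → ∞. Then for every δ > 0 one has liminf_{t→∞} t^{α+1} · (−F'(t)) ≥ δ^{−1}·(1 − (1+δ)^{−α}). -/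
/-!
Since `F'` is nondecreasing, `F` is convex and lies above its tangent line at `t`; scaled by
`t ^ α` this reads `t ^ α * (F t - F (c * t)) ≤ (c - 1) * (t ^ (α + 1) * -F' t)` for every
`c ≥ 0`, and the left side tends to `1 - c ^ (-α)`. The choice `c = 1 + δ` bounds the liminf
from below, while `c = 1 / 2` bounds `t ^ (α + 1) * -F' t` from above, which the liminf in `ℝ`
needs in order not to take a junk value.
-/

open Filter Set Topology

theorem MonotoneOn.convexOn_of_hasDerivWithinAt {D : Set ℝ} {f f' : ℝ → ℝ}
    (hD : Convex ℝ D) (hf : ∀ x ∈ D, HasDerivWithinAt f (f' x) D x) (hf' : MonotoneOn f' D) :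
    ConvexOn ℝ D f := by
  have hderiv : ∀ x ∈ interior D, HasDerivAt f (f' x) x := fun x hx =>
    (hf x (interior_subset hx)).hasDerivAt (mem_interior_iff_mem_nhds.mp hx)
  refine MonotoneOn.convexOn_of_deriv hD (fun x hx => (hf x hx).continuousWithinAt)
    (fun x hx => (hderiv x hx).differentiableAt.differentiableWithinAt) ?_
  exact (hf'.mono interior_subset).congr fun x hx => (hderiv x hx).deriv.symm

theorem ConvexOn.add_deriv_mul_sub_le {S : Set ℝ} {f : ℝ → ℝ} {f' x y : ℝ}
    (hf : ConvexOn ℝ S f) (hx : x ∈ S) (hy : y ∈ S) (hf' : HasDerivWithinAt f f' S x) :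
    f x + f' * (y - x) ≤ f y := by
  rcases lt_trichotomy x y with hxy | rfl | hyx
  · have hslope := hf.le_slope_of_hasDerivWithinAt hx hy hxy hf'
    rw [slope_def_field, le_div_iff₀ (sub_pos.mpr hxy)] at hslope
    linarith
  · simp
  · have hslope := hf.slope_le_of_hasDerivWithinAt hy hx hyx hf'
    rw [slope_def_field, div_le_iff₀ (sub_pos.mpr hyx)] at hslope
    linarith

theorem Filter.Tendsto.rpow_mul_sub_comp_const_mul {F : ℝ → ℝ} {α c L : ℝ} (hc : 0 < c)
    (hF : Tendsto (fun t => t ^ α * F t) atTop (𝓝 L)) :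
    Tendsto (fun t => t ^ α * (F t - F (c * t))) atTop (𝓝 (L * (1 - c ^ (-α)))) := by
  have hscaled := hF.comp (tendsto_id.const_mul_atTop hc)
  rw [show L * (1 - c ^ (-α)) = L - c ^ (-α) * L by ring]
  refine (hF.sub (hscaled.const_mul _)).congr' ?_
  filter_upwards [eventually_gt_atTop 0] with t ht
  simp only [Function.comp_apply, id_eq, Real.mul_rpow hc.le ht.le]
  rw [← mul_assoc, ← mul_assoc, ← Real.rpow_add hc, neg_add_cancel, Real.rpow_zero, one_mul]
  exact (mul_sub _ _ _).symm

theorem ConvexOn.rpow_mul_sub_le {F : ℝ → ℝ} {α c t f' : ℝ} (hF : ConvexOn ℝ (Ici 0) F)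
    (hf' : HasDerivWithinAt F f' (Ici 0) t) (ht : 0 < t) (hc : 0 ≤ c) :
    t ^ α * (F t - F (c * t)) ≤ (c - 1) * (t ^ (α + 1) * -f') := by
  have htangent := hF.add_deriv_mul_sub_le ht.le (mul_nonneg hc ht.le) hf'
  have hpow : 0 ≤ t ^ α := Real.rpow_nonneg ht.le α
  calc t ^ α * (F t - F (c * t)) ≤ t ^ α * (f' * (t - c * t)) := by gcongr; linarith
    _ = (c - 1) * (t ^ (α + 1) * -f') := by rw [Real.rpow_add_one ht.ne']; ring

theorem asymptotic_derivative_liminf_general (α : ℝ) (F F' : ℝ → ℝ)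
    (hderiv : ∀ t ∈ Ici (0:ℝ), HasDerivWithinAt F (F' t) (Ici 0) t)
    (hmono : ∀ s ∈ Ici (0:ℝ), ∀ t ∈ Ici (0:ℝ), s ≤ t → F' s ≤ F' t)
    (hlim : Tendsto (fun t : ℝ => t ^ α * F t) atTop (nhds 1)) :
    ∀ δ : ℝ, 0 < δ →
      δ⁻¹ * (1 - (1 + δ) ^ (-α)) ≤ atTop.liminf (fun t : ℝ => t ^ (α + 1) * (-F' t)) := by
  intro δ hδ
  have hconv : ConvexOn ℝ (Ici 0) F :=
    MonotoneOn.convexOn_of_hasDerivWithinAt (convex_Ici 0) hderiv hmono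
  have hdrop : ∀ c > 0,
      Tendsto (fun t => t ^ α * (F t - F (c * t))) atTop (𝓝 (1 - c ^ (-α))) :=
    fun c hc => by simpa using hlim.rpow_mul_sub_comp_const_mul hc
  have htangent : ∀ c ≥ 0, ∀ᶠ t in atTop,
      t ^ α * (F t - F (c * t)) ≤ (c - 1) * (t ^ (α + 1) * -F' t) :=
    fun c hc => (eventually_gt_atTop 0).mono fun t ht =>
      hconv.rpow_mul_sub_le (hderiv t (mem_Ici.mpr ht.le)) ht hc
  have hlower : ∀ᶠ t in atTop,
      δ⁻¹ * (t ^ α * (F t - F ((1 + δ) * t))) ≤ t ^ (α + 1) * -F' t :=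
    (htangent (1 + δ) (by positivity)).mono fun t ht => by
      rwa [add_sub_cancel_left, ← inv_mul_le_iff₀ hδ] at ht
  have hupper : ∀ᶠ t in atTop,
      t ^ (α + 1) * -F' t ≤ -2 * (t ^ α * (F t - F (2⁻¹ * t))) :=
    (htangent 2⁻¹ (by positivity)).mono fun t ht => by linarith
  have hlower_lim := (hdrop (1 + δ) (by positivity)).const_mul δ⁻¹
  have hupper_lim := (hdrop 2⁻¹ (by positivity)).const_mul (-2)
  rw [← hlower_lim.liminf_eq]
  exact liminf_le_liminf hlower hlower_lim.isBoundedUnder_ge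
    (hupper_lim.isBoundedUnder_le.mono_le hupper).isCoboundedUnder_ge

/-- Lower-bound half of the proof of Lemma 3.5 (Asymptotic derivative):
for every `δ > 0`, `liminf_{t→∞} t^(α+1) * (-F' t) ≥ δ⁻¹ * (1 - (1+δ)^(-α))`. -/
theorem asymptotic_derivative_liminf (α : ℝ) (hα : 0 < α) (F F' : ℝ → ℝ)
    (hderiv : ∀ t ∈ Ici (0:ℝ), HasDerivWithinAt F (F' t) (Ici 0) t)
    (hcont : ContinuousOn F' (Ici 0))
    (hpos : ∀ t ∈ Ici (0:ℝ), 0 < F t)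
    (hmono : ∀ s ∈ Ici (0:ℝ), ∀ t ∈ Ici (0:ℝ), s ≤ t → F' s ≤ F' t)
    (hlim : Tendsto (fun t : ℝ => t ^ α * F t) atTop (nhds 1)) :
    ∀ δ : ℝ, 0 < δ →
      δ⁻¹ * (1 - (1 + δ) ^ (-α)) ≤ atTop.liminf (fun t : ℝ => t ^ (α + 1) * (-F' t)) :=
  asymptotic_derivative_liminf_general α F F' hderiv hmono hlim
end

section
/- Let α > 0 and let F : ℝ → ℝ be continuously differentiable on [0,∞) with F(t) > 0 for all t ≥ 0. Assume that the derivative t ↦ F'(t) is nondecreasing on [0,∞) and that t^α · F(t) → 1 as t → ∞. Then for every 0 < δ < 1 one has limsup_{t→∞} t^{α+1} · (−F'(t)) ≤ δ^{−1}·((1−δ)^{−α} − 1). -/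
open Filter Set

/-- Upper-bound half of the proof of Lemma 3.5 (Asymptotic derivative):
for every `0 < δ < 1`, `limsup_{t→∞} t^(α+1) * (-F' t) ≤ δ⁻¹ * ((1-δ)^(-α) - 1)`. -/
theorem asymptotic_derivative_limsup (α : ℝ) (hα : 0 < α) (F F' : ℝ → ℝ)
    (hderiv : ∀ t ∈ Ici (0:ℝ), HasDerivWithinAt F (F' t) (Ici 0) t)
    (hcont : ContinuousOn F' (Ici 0))
    (hpos : ∀ t ∈ Ici (0:ℝ), 0 < F t)
    (hmono : ∀ s ∈ Ici (0:ℝ), ∀ t ∈ Ici (0:ℝ), s ≤ t → F' s ≤ F' t)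
    (hlim : Tendsto (fun t : ℝ => t ^ α * F t) atTop (nhds 1)) :
    ∀ δ : ℝ, 0 < δ → δ < 1 →
      atTop.limsup (fun t : ℝ => t ^ (α + 1) * (-F' t)) ≤ δ⁻¹ * ((1 - δ) ^ (-α) - 1) := by
  intro δ hδ0 hδ1
  have h1δ : (0:ℝ) < 1 - δ := by linarith
  -- derivative at positive points
  have hderiv' : ∀ t : ℝ, 0 < t → HasDerivAt F (F' t) t := fun t ht =>
    (hderiv t ht.le).hasDerivAt (Ici_mem_nhds ht)
  -- F tends to 0
  have hF0 : Tendsto F atTop (nhds 0) := by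
    have h0 : Tendsto (fun t : ℝ => t ^ (-α) * (t ^ α * F t)) atTop (nhds (0 * 1)) :=
      (tendsto_rpow_neg_atTop hα).mul hlim
    rw [zero_mul] at h0
    apply h0.congr'
    filter_upwards [eventually_gt_atTop (0:ℝ)] with t ht
    rw [← mul_assoc, ← Real.rpow_add ht]
    simp
  -- F' is nonpositive
  have hF'le : ∀ t : ℝ, 0 ≤ t → F' t ≤ 0 := by
    intro t0 ht0
    by_contra hc
    push_neg at hc
    have hgrow : ∀ t : ℝ, t0 ≤ t → F' t0 * (t - t0) ≤ F t - F t0 := by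
      intro t ht
      refine (convex_Ici t0).mul_sub_le_image_sub_of_le_deriv ?_ ?_ ?_ t0 (mem_Ici.2 le_rfl) t (mem_Ici.2 ht) ht
      · intro x hx
        exact ((hderiv x (le_trans ht0 hx)).continuousWithinAt).mono
          (fun y hy => le_trans ht0 hy)
      · intro x hx
        rw [interior_Ici] at hx
        exact ((hderiv' x (lt_of_le_of_lt ht0 hx)).differentiableAt).differentiableWithinAt
      · intro x hx
        rw [interior_Ici] at hx
        rw [(hderiv' x (lt_of_le_of_lt ht0 hx)).deriv]
        exact hmono t0 ht0 x (le_trans ht0 hx.le) hx.le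
    have htop : Tendsto F atTop atTop := by
      refine tendsto_atTop_mono' atTop
        (f₁ := fun t => F t0 + F' t0 * (t - t0)) ?_ ?_
      · filter_upwards [eventually_ge_atTop t0] with t ht
        linarith [hgrow t ht]
      · apply tendsto_atTop_add_const_left
        apply Tendsto.const_mul_atTop hc
        exact tendsto_atTop_add_const_right _ _ tendsto_id
    exact not_tendsto_nhds_of_tendsto_atTop htop 0 hF0
  -- key mean-value inequality
  have key : ∀ t : ℝ, 1 ≤ t → F t - F ((1 - δ) * t) ≤ F' t * (t - (1 - δ) * t) := by
    intro t ht
    have ht0 : (0:ℝ) < t := lt_of_lt_of_le one_pos ht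
    have hx0 : 0 < (1 - δ) * t := mul_pos h1δ ht0
    have hxt : (1 - δ) * t ≤ t := by nlinarith
    refine (convex_Icc ((1 - δ) * t) t).image_sub_le_mul_sub_of_deriv_le ?_ ?_ ?_
      ((1 - δ) * t) (left_mem_Icc.2 hxt) t (right_mem_Icc.2 hxt) hxt
    · intro x hx
      exact ((hderiv x (le_trans hx0.le hx.1)).continuousWithinAt).mono
        (fun y hy => le_trans hx0.le hy.1)
    · intro x hx
      rw [interior_Icc] at hx
      exact ((hderiv' x (lt_trans hx0 hx.1)).differentiableAt).differentiableWithinAt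
    · intro x hx
      rw [interior_Icc] at hx
      rw [(hderiv' x (lt_trans hx0 hx.1)).deriv]
      exact hmono x (lt_trans hx0 hx.1).le t ht0.le hx.2.le
  -- the comparison function
  set g : ℝ → ℝ := fun t =>
    δ⁻¹ * ((1 - δ) ^ (-α) * (((1 - δ) * t) ^ α * F ((1 - δ) * t)) - t ^ α * F t) with hg
  have hone : (1 - δ) ^ (-α) * (1 - δ) ^ α = 1 := by
    rw [← Real.rpow_add h1δ]; simp
  -- eventual bound
  have hbound : ∀ᶠ t in atTop, t ^ (α + 1) * (-F' t) ≤ g t := by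
    filter_upwards [eventually_ge_atTop (1:ℝ)] with t ht
    have ht0 : (0:ℝ) < t := lt_of_lt_of_le one_pos ht
    have hkey := key t ht
    have htα : (0:ℝ) ≤ t ^ α := Real.rpow_nonneg ht0.le α
    have hsplit : ((1 - δ) * t) ^ α = (1 - δ) ^ α * t ^ α :=
      Real.mul_rpow h1δ.le ht0.le
    have hrw : (1 - δ) ^ (-α) * (((1 - δ) * t) ^ α * F ((1 - δ) * t))
        = t ^ α * F ((1 - δ) * t) := by
      rw [hsplit]; rw [show (1 - δ) ^ (-α) * ((1 - δ) ^ α * t ^ α * F ((1 - δ) * t))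
        = ((1 - δ) ^ (-α) * (1 - δ) ^ α) * (t ^ α * F ((1 - δ) * t)) by ring, hone, one_mul]
    have hpow : t ^ (α + 1) = t ^ α * t := by
      rw [Real.rpow_add ht0, Real.rpow_one]
    have hgt : g t = δ⁻¹ * (t ^ α * F ((1 - δ) * t) - t ^ α * F t) := by
      simp only [hg]
      rw [hrw]
    have h1 : t ^ α * (F t - F ((1 - δ) * t)) ≤ t ^ α * (F' t * (t - (1 - δ) * t)) :=
      mul_le_mul_of_nonneg_left hkey htα
    rw [hgt, hpow, mul_comm δ⁻¹, ← div_eq_mul_inv, le_div_iff₀ hδ0]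
    nlinarith [h1]
  -- limit of g
  have hglim : Tendsto g atTop (nhds (δ⁻¹ * ((1 - δ) ^ (-α) - 1))) := by
    have hcomp : Tendsto (fun t : ℝ => ((1 - δ) * t) ^ α * F ((1 - δ) * t)) atTop (nhds 1) :=
      hlim.comp (Tendsto.const_mul_atTop h1δ tendsto_id)
    have := ((hcomp.const_mul ((1 - δ) ^ (-α))).sub hlim).const_mul δ⁻¹
    simpa using this
  have hcobdd : IsCoboundedUnder (· ≤ ·) atTop (fun t : ℝ => t ^ (α + 1) * (-F' t)) := by
    apply isCoboundedUnder_le_of_eventually_le atTop (x := 0)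
    filter_upwards [eventually_ge_atTop (1:ℝ)] with t ht
    have ht0 : (0:ℝ) < t := lt_of_lt_of_le one_pos ht
    have := hF'le t ht0.le
    have := Real.rpow_nonneg ht0.le (α + 1)
    nlinarith
  calc atTop.limsup (fun t : ℝ => t ^ (α + 1) * (-F' t))
      ≤ atTop.limsup g := limsup_le_limsup hbound hcobdd hglim.isBoundedUnder_le
    _ = δ⁻¹ * ((1 - δ) ^ (-α) - 1) := hglim.limsup_eq
end

section
/- Let α > 0, let K₁, K₂ ≥ 0, and let G₁, G₂ : ℝ → ℝ be measurable, nonnegative functions vanishing on (−∞,0) such that ∫₀^∞ G_i(t) dt = 1 and G_i(t) ≤ K_i · t^{−α} for all t > 0 (i = 1,2). Then for every 0 < p < 1 and every t > 0, (G₁ ∗ G₂)(t) = ∫₀ᵗ G₁(s) G₂(t−s) ds ≤ (K₁·p^{−α} + K₂·(1−p)^{−α}) · t^{−α}. -/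
open Filter Set MeasureTheory

/-- Two-fold convolution bound from the proof of Lemma 3.8: if `G₁, G₂` are nonnegative,
vanish on `(-∞,0)`, have total integral one over `(0,∞)`, and satisfy `Gᵢ t ≤ Kᵢ * t^(-α)`,
then `(G₁ ∗ G₂)(t) ≤ (K₁ p^(-α) + K₂ (1-p)^(-α)) t^(-α)` for every `0 < p < 1` and `t > 0`. -/
theorem convolution_two_fold_bound (α K₁ K₂ : ℝ) (hα : 0 < α) (hK₁ : 0 ≤ K₁) (hK₂ : 0 ≤ K₂)
    (G₁ G₂ : ℝ → ℝ) (hm₁ : Measurable G₁) (hm₂ : Measurable G₂)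
    (hnn₁ : ∀ t, 0 ≤ G₁ t) (hnn₂ : ∀ t, 0 ≤ G₂ t)
    (hz₁ : ∀ t < (0:ℝ), G₁ t = 0) (hz₂ : ∀ t < (0:ℝ), G₂ t = 0)
    (hint₁ : ∫⁻ t in Ioi (0:ℝ), ENNReal.ofReal (G₁ t) = 1)
    (hint₂ : ∫⁻ t in Ioi (0:ℝ), ENNReal.ofReal (G₂ t) = 1)
    (hb₁ : ∀ t, 0 < t → G₁ t ≤ K₁ * t ^ (-α))
    (hb₂ : ∀ t, 0 < t → G₂ t ≤ K₂ * t ^ (-α)) :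
    ∀ p t : ℝ, 0 < p → p < 1 → 0 < t →
      (∫ s in (0:ℝ)..t, G₁ s * G₂ (t - s)) ≤
        (K₁ * p ^ (-α) + K₂ * (1 - p) ^ (-α)) * t ^ (-α) := by
  have hInt₁ : IntegrableOn G₁ (Ioi (0:ℝ)) := by
    refine ⟨hm₁.aestronglyMeasurable.restrict, ?_⟩
    rw [hasFiniteIntegral_iff_ofReal (ae_of_all _ hnn₁), hint₁]
    exact ENNReal.one_lt_top
  have hInt₂ : IntegrableOn G₂ (Ioi (0:ℝ)) := by
    refine ⟨hm₂.aestronglyMeasurable.restrict, ?_⟩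
    rw [hasFiniteIntegral_iff_ofReal (ae_of_all _ hnn₂), hint₂]
    exact ENNReal.one_lt_top
  have hval₁ : ∫ s in Ioi (0:ℝ), G₁ s = 1 := by
    rw [MeasureTheory.integral_eq_lintegral_of_nonneg_ae (ae_of_all _ hnn₁)
      hm₁.aestronglyMeasurable.restrict, hint₁]
    simp
  have hval₂ : ∫ s in Ioi (0:ℝ), G₂ s = 1 := by
    rw [MeasureTheory.integral_eq_lintegral_of_nonneg_ae (ae_of_all _ hnn₂)
      hm₂.aestronglyMeasurable.restrict, hint₂]
    simp
  have key₁ : ∀ b : ℝ, (∫ s in Ioc (0:ℝ) b, G₁ s) ≤ 1 := by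
    intro b
    rw [← hval₁]
    exact setIntegral_mono_set hInt₁ (ae_of_all _ hnn₁) Ioc_subset_Ioi_self.eventuallyLE
  have key₂ : ∀ b : ℝ, (∫ s in Ioc (0:ℝ) b, G₂ s) ≤ 1 := by
    intro b
    rw [← hval₂]
    exact setIntegral_mono_set hInt₂ (ae_of_all _ hnn₂) Ioc_subset_Ioi_self.eventuallyLE
  intro p t hp hp1 ht
  set a := p * t with ha
  have ha0 : 0 < a := mul_pos hp ht
  have hat : a < t := by nlinarith
  have hta : 0 < t - a := by linarith
  have hta' : t - a = (1 - p) * t := by ring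
  set C₁ : ℝ := K₁ * a ^ (-α) with hC₁
  set C₂ : ℝ := K₂ * (t - a) ^ (-α) with hC₂
  have hC₁0 : 0 ≤ C₁ := mul_nonneg hK₁ (Real.rpow_nonneg ha0.le _)
  have hC₂0 : 0 ≤ C₂ := mul_nonneg hK₂ (Real.rpow_nonneg hta.le _)
  have hmprod : Measurable fun s => G₁ s * G₂ (t - s) :=
    hm₁.mul (hm₂.comp (measurable_const.sub measurable_id))
  -- pointwise bounds
  have hG2bd : ∀ s ∈ Icc (0:ℝ) a, G₂ (t - s) ≤ C₂ := by
    intro s hs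
    have hts : 0 < t - s := by linarith [hs.2]
    calc G₂ (t - s) ≤ K₂ * (t - s) ^ (-α) := hb₂ _ hts
      _ ≤ C₂ := by
          refine mul_le_mul_of_nonneg_left ?_ hK₂
          exact Real.rpow_le_rpow_of_nonpos hta (by linarith [hs.2]) (by linarith)
  have hG1bd : ∀ s ∈ Icc a t, G₁ s ≤ C₁ := by
    intro s hs
    calc G₁ s ≤ K₁ * s ^ (-α) := hb₁ _ (lt_of_lt_of_le ha0 hs.1)
      _ ≤ C₁ := by
          refine mul_le_mul_of_nonneg_left ?_ hK₁
          exact Real.rpow_le_rpow_of_nonpos ha0 hs.1 (by linarith)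
  -- integrability on the two pieces
  have hii₁G : IntervalIntegrable G₁ volume 0 a := by
    rw [intervalIntegrable_iff_integrableOn_Ioc_of_le ha0.le]
    exact hInt₁.mono_set Ioc_subset_Ioi_self
  have hii₂G : IntervalIntegrable (fun s => G₂ (t - s)) volume a t := by
    have h := (intervalIntegrable_iff_integrableOn_Ioc_of_le hta.le).2
      (hInt₂.mono_set Ioc_subset_Ioi_self) |>.comp_sub_left t
    simpa using h.symm
  have hii₁ : IntervalIntegrable (fun s => G₁ s * G₂ (t - s)) volume 0 a := by
    rw [intervalIntegrable_iff_integrableOn_Ioc_of_le ha0.le]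
    refine Integrable.mono' ((hInt₁.mono_set Ioc_subset_Ioi_self).const_mul C₂)
      hmprod.aestronglyMeasurable.restrict ?_
    filter_upwards [ae_restrict_mem measurableSet_Ioc] with s hs
    rw [Real.norm_eq_abs, abs_of_nonneg (mul_nonneg (hnn₁ s) (hnn₂ _))]
    calc G₁ s * G₂ (t - s) ≤ G₁ s * C₂ :=
          mul_le_mul_of_nonneg_left (hG2bd s ⟨hs.1.le, hs.2⟩) (hnn₁ s)
      _ = C₂ * G₁ s := mul_comm _ _
  have hii₂ : IntervalIntegrable (fun s => G₁ s * G₂ (t - s)) volume a t := by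
    rw [intervalIntegrable_iff_integrableOn_Ioc_of_le hat.le]
    have h2 : IntegrableOn (fun s => G₂ (t - s)) (Ioc a t) := by
      rw [← intervalIntegrable_iff_integrableOn_Ioc_of_le hat.le]
      exact hii₂G
    refine Integrable.mono' (h2.const_mul C₁) hmprod.aestronglyMeasurable.restrict ?_
    filter_upwards [ae_restrict_mem measurableSet_Ioc] with s hs
    rw [Real.norm_eq_abs, abs_of_nonneg (mul_nonneg (hnn₁ s) (hnn₂ _))]
    exact mul_le_mul_of_nonneg_right (hG1bd s ⟨hs.1.le, hs.2⟩) (hnn₂ _)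
  -- bound on [0, a]
  have I₁le : (∫ s in (0:ℝ)..a, G₁ s * G₂ (t - s)) ≤ C₂ := by
    have step : (∫ s in (0:ℝ)..a, G₁ s * G₂ (t - s)) ≤ ∫ s in (0:ℝ)..a, C₂ * G₁ s := by
      refine intervalIntegral.integral_mono_on ha0.le hii₁ (hii₁G.const_mul C₂) ?_
      intro s hs
      calc G₁ s * G₂ (t - s) ≤ G₁ s * C₂ :=
            mul_le_mul_of_nonneg_left (hG2bd s hs) (hnn₁ s)
        _ = C₂ * G₁ s := mul_comm _ _
    calc (∫ s in (0:ℝ)..a, G₁ s * G₂ (t - s)) ≤ ∫ s in (0:ℝ)..a, C₂ * G₁ s := step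
      _ = C₂ * ∫ s in (0:ℝ)..a, G₁ s := intervalIntegral.integral_const_mul _ _
      _ ≤ C₂ * 1 := by
          refine mul_le_mul_of_nonneg_left ?_ hC₂0
          rw [intervalIntegral.integral_of_le ha0.le]
          exact key₁ a
      _ = C₂ := mul_one _
  -- bound on [a, t]
  have I₂le : (∫ s in a..t, G₁ s * G₂ (t - s)) ≤ C₁ := by
    have step : (∫ s in a..t, G₁ s * G₂ (t - s)) ≤ ∫ s in a..t, C₁ * G₂ (t - s) := by
      refine intervalIntegral.integral_mono_on hat.le hii₂ (hii₂G.const_mul C₁) ?_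
      intro s hs
      exact mul_le_mul_of_nonneg_right (hG1bd s hs) (hnn₂ _)
    have subst : (∫ s in a..t, G₂ (t - s)) = ∫ u in (0:ℝ)..(t - a), G₂ u := by
      rw [intervalIntegral.integral_comp_sub_left G₂ t, sub_self]
    calc (∫ s in a..t, G₁ s * G₂ (t - s)) ≤ ∫ s in a..t, C₁ * G₂ (t - s) := step
      _ = C₁ * ∫ s in a..t, G₂ (t - s) := intervalIntegral.integral_const_mul _ _
      _ ≤ C₁ * 1 := by
          refine mul_le_mul_of_nonneg_left ?_ hC₁0
          rw [subst, intervalIntegral.integral_of_le hta.le]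
          exact key₂ _
      _ = C₁ := mul_one _
  have hsplit : (∫ s in (0:ℝ)..t, G₁ s * G₂ (t - s)) =
      (∫ s in (0:ℝ)..a, G₁ s * G₂ (t - s)) + ∫ s in a..t, G₁ s * G₂ (t - s) :=
    (intervalIntegral.integral_add_adjacent_intervals hii₁ hii₂).symm
  have hrhs : C₂ + C₁ = (K₁ * p ^ (-α) + K₂ * (1 - p) ^ (-α)) * t ^ (-α) := by
    rw [hC₁, hC₂, ha, hta', Real.mul_rpow hp.le ht.le,
      Real.mul_rpow (by linarith : (0:ℝ) ≤ 1 - p) ht.le]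
    ring
  rw [hsplit, ← hrhs]
  linarith [I₁le, I₂le]
end

section
/- Let α > 0, let n ≥ 1, let K₁,…,K_n ≥ 0, and let G₁,…,G_n : ℝ → ℝ be measurable, nonnegative functions vanishing on (−∞,0) such that ∫₀^∞ G_i(t) dt = 1 and G_i(t) ≤ K_i · t^{−α} for all t > 0 and all i = 1,…,n. Then for all positive reals p₁,…,p_n with p₁+⋯+p_n = 1 and all t > 0, the n-fold convolution satisfies (G₁ ∗ ⋯ ∗ G_n)(t) ≤ (K₁·p₁^{−α} + ⋯ + K_n·p_n^{−α}) · t^{−α}. -/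
open Filter Set MeasureTheory

/-- Convolution of two functions vanishing on `(-∞,0)`:
`(f ∗ g)(t) = ∫₀ᵗ f(s) g(t-s) ds`. -/
noncomputable def conv (f g : ℝ → ℝ) : ℝ → ℝ :=
  fun t => ∫ s in (0:ℝ)..t, f s * g (t - s)

/-- Iterated convolution `G 0 ∗ G 1 ∗ ⋯ ∗ G n`. -/
noncomputable def iterConv (G : ℕ → ℝ → ℝ) : ℕ → ℝ → ℝ
  | 0 => G 0
  | n + 1 => conv (iterConv G n) (G (n + 1))

/-!
Split `(f ∗ g)(t) = ∫₀ᵗ f(s) g(t-s) ds` at `s = q t`. On `(0, q t]` we have `t - s ≥ (1 - q) t`,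
so `g(t - s) ≤ B ((1 - q) t)^(-α)` while `∫ f ≤ 1`; on `(q t, t]` we have `f(s) ≤ A (q t)^(-α)`
while `∫ g ≤ 1`. This gives `(f ∗ g)(t) ≤ (A q^(-α) + B (1 - q)^(-α)) t^(-α)`. By Tonelli,
convolution also preserves `∫ ≤ 1`, so induction on `n`, with `q = p₁ + ⋯ + pₙ₋₁` and the
renormalized weights `pᵢ / q` for the first `n - 1` factors, gives the bound. Everything is done for
`|Gᵢ|`, using `|f ∗ g| ≤ |f| ∗ |g|`.
-/

open scoped ENNReal

lemma lintegral_indicator_Ici_zero (F : ℝ → ℝ≥0∞) :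
    ∫⁻ u, (Ici 0).indicator F u = ∫⁻ u in Ioi 0, F u := by
  rw [lintegral_indicator measurableSet_Ici]
  exact setLIntegral_congr Ioi_ae_eq_Ici.symm

lemma setLIntegral_Ioc_comp_sub_left_le (F : ℝ → ℝ≥0∞) (a t : ℝ) :
    ∫⁻ s in Ioc a t, F (t - s) ≤ ∫⁻ u in Ioi 0, F u :=
  calc ∫⁻ s in Ioc a t, F (t - s) = ∫⁻ s in Ioc a t, (Ici 0).indicator F (t - s) :=
        setLIntegral_congr_fun measurableSet_Ioc fun s hs =>
          (indicator_of_mem (mem_Ici.2 (sub_nonneg.2 hs.2)) F).symm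
    _ ≤ ∫⁻ s, (Ici 0).indicator F (t - s) := setLIntegral_le_lintegral _ _
    _ = ∫⁻ u in Ioi 0, F u := by rw [lintegral_sub_left_eq_self, lintegral_indicator_Ici_zero]

lemma nonneg_of_abs_le_mul_rpow {h : ℝ → ℝ} {C α : ℝ}
    (hC : ∀ s, 0 < s → |h s| ≤ C * s ^ (-α)) : 0 ≤ C := by
  simpa using (abs_nonneg _).trans (hC 1 one_pos)

lemma enorm_le_ofReal_mul_rpow_of_le {h : ℝ → ℝ} {C α a s : ℝ} (hα : 0 ≤ α)
    (hC : ∀ s, 0 < s → |h s| ≤ C * s ^ (-α)) (ha : 0 < a) (has : a ≤ s) :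
    ‖h s‖ₑ ≤ ENNReal.ofReal (C * a ^ (-α)) := by
  rw [Real.enorm_eq_ofReal_abs]
  refine ENNReal.ofReal_le_ofReal ((hC s (ha.trans_le has)).trans ?_)
  exact mul_le_mul_of_nonneg_left (Real.rpow_le_rpow_of_nonpos ha has (neg_nonpos.2 hα))
    (nonneg_of_abs_le_mul_rpow hC)

section Conv

variable {f g : ℝ → ℝ}

lemma measurable_conv (hf : Measurable f) (hg : Measurable g) : Measurable (conv f g) := by
  have hF : Measurable fun p : ℝ × ℝ => f p.2 * g (p.1 - p.2) :=
    (hf.comp measurable_snd).mul (hg.comp (measurable_fst.sub measurable_snd))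
  have integral_Ioc : ∀ a b : ℝ → ℝ, Measurable a → Measurable b →
      Measurable fun t => ∫ s in Ioc (a t) (b t), f s * g (t - s) := by
    intro a b ha hb
    have hS : MeasurableSet {p : ℝ × ℝ | p.2 ∈ Ioc (a p.1) (b p.1)} :=
      (measurableSet_lt (ha.comp measurable_fst) measurable_snd).inter
        (measurableSet_le measurable_snd (hb.comp measurable_fst))
    convert ((hF.indicator hS).stronglyMeasurable.integral_prod_right' (ν := volume)).measurable
      using 2 with t
    rw [← integral_indicator measurableSet_Ioc]
    rfl
  exact (integral_Ioc _ _ measurable_const measurable_id).sub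
    (integral_Ioc _ _ measurable_id measurable_const)

lemma enorm_conv_le {t : ℝ} (ht : 0 ≤ t) :
    ‖conv f g t‖ₑ ≤ ∫⁻ s in Ioc 0 t, ‖f s‖ₑ * ‖g (t - s)‖ₑ := by
  rw [conv, intervalIntegral.integral_of_le ht]
  simpa only [enorm_mul] using
    enorm_integral_le_lintegral_enorm (μ := volume.restrict (Ioc 0 t)) fun s => f s * g (t - s)

lemma lintegral_enorm_conv_le (hf : Measurable f) (hg : Measurable g) :
    ∫⁻ t in Ioi 0, ‖conv f g t‖ₑ ≤ (∫⁻ s in Ioi 0, ‖f s‖ₑ) * ∫⁻ u in Ioi 0, ‖g u‖ₑ := by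
  set g₀ : ℝ → ℝ≥0∞ := (Ici 0).indicator fun u => ‖g u‖ₑ
  have hg₀ : Measurable g₀ := hg.enorm.indicator measurableSet_Ici
  have pointwise : ∀ t ∈ Ioi (0 : ℝ), ‖conv f g t‖ₑ ≤ ∫⁻ s in Ioi 0, ‖f s‖ₑ * g₀ (t - s) := by
    intro t ht
    calc ‖conv f g t‖ₑ ≤ ∫⁻ s in Ioc 0 t, ‖f s‖ₑ * ‖g (t - s)‖ₑ := enorm_conv_le (le_of_lt ht)
      _ = ∫⁻ s in Ioc 0 t, ‖f s‖ₑ * g₀ (t - s) :=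
          setLIntegral_congr_fun measurableSet_Ioc fun s hs => by
            rw [← indicator_of_mem (mem_Ici.2 (sub_nonneg.2 hs.2)) fun u => ‖g u‖ₑ]
      _ ≤ ∫⁻ s in Ioi 0, ‖f s‖ₑ * g₀ (t - s) := lintegral_mono_set Ioc_subset_Ioi_self
  calc ∫⁻ t in Ioi 0, ‖conv f g t‖ₑ
      ≤ ∫⁻ t in Ioi 0, ∫⁻ s in Ioi 0, ‖f s‖ₑ * g₀ (t - s) :=
        setLIntegral_mono' measurableSet_Ioi pointwise
    _ = ∫⁻ s in Ioi 0, ∫⁻ t in Ioi 0, ‖f s‖ₑ * g₀ (t - s) :=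
        lintegral_lintegral_swap ((hf.enorm.comp measurable_snd).mul
          (hg₀.comp (measurable_fst.sub measurable_snd))).aemeasurable
    _ ≤ ∫⁻ s in Ioi 0, ‖f s‖ₑ * ∫⁻ t, g₀ (t - s) := by
        refine lintegral_mono fun s => ?_
        rw [lintegral_const_mul (f := fun t => g₀ (t - s)) _ (hg₀.comp (measurable_sub_const s))]
        gcongr
        exact Measure.restrict_le_self
    _ = (∫⁻ s in Ioi 0, ‖f s‖ₑ) * ∫⁻ u in Ioi 0, ‖g u‖ₑ := by
        simp_rw [lintegral_sub_right_eq_self g₀, g₀, lintegral_indicator_Ici_zero]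
        exact lintegral_mul_const _ hf.enorm

lemma abs_conv_le_of_abs_le_mul_rpow {α A B q t : ℝ} (hα : 0 ≤ α) (hq₀ : 0 < q) (hq₁ : q < 1)
    (ht : 0 < t) (hfi : ∫⁻ s in Ioi 0, ‖f s‖ₑ ≤ 1) (hgi : ∫⁻ s in Ioi 0, ‖g s‖ₑ ≤ 1)
    (hfA : ∀ s, 0 < s → |f s| ≤ A * s ^ (-α)) (hgB : ∀ s, 0 < s → |g s| ≤ B * s ^ (-α)) :
    |conv f g t| ≤ (A * q ^ (-α) + B * (1 - q) ^ (-α)) * t ^ (-α) := by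
  have hq₁' : 0 < 1 - q := sub_pos.2 hq₁
  have hA := nonneg_of_abs_le_mul_rpow hfA
  have hB := nonneg_of_abs_le_mul_rpow hgB
  set CA := A * (q * t) ^ (-α)
  set CB := B * ((1 - q) * t) ^ (-α)
  have near_zero : ∫⁻ s in Ioc 0 (q * t), ‖f s‖ₑ * ‖g (t - s)‖ₑ ≤ ENNReal.ofReal CB :=
    calc ∫⁻ s in Ioc 0 (q * t), ‖f s‖ₑ * ‖g (t - s)‖ₑ
        ≤ ∫⁻ s in Ioc 0 (q * t), ‖f s‖ₑ * ENNReal.ofReal CB := by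
          refine setLIntegral_mono' measurableSet_Ioc fun s hs => ?_
          gcongr
          exact enorm_le_ofReal_mul_rpow_of_le hα hgB (by positivity) (by linarith [hs.2])
      _ = (∫⁻ s in Ioc 0 (q * t), ‖f s‖ₑ) * ENNReal.ofReal CB :=
          lintegral_mul_const' _ _ ENNReal.ofReal_ne_top
      _ ≤ ENNReal.ofReal CB :=
          mul_le_of_le_one_left' ((lintegral_mono_set Ioc_subset_Ioi_self).trans hfi)
  have near_t : ∫⁻ s in Ioc (q * t) t, ‖f s‖ₑ * ‖g (t - s)‖ₑ ≤ ENNReal.ofReal CA :=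
    calc ∫⁻ s in Ioc (q * t) t, ‖f s‖ₑ * ‖g (t - s)‖ₑ
        ≤ ∫⁻ s in Ioc (q * t) t, ENNReal.ofReal CA * ‖g (t - s)‖ₑ := by
          refine setLIntegral_mono' measurableSet_Ioc fun s hs => ?_
          gcongr
          exact enorm_le_ofReal_mul_rpow_of_le hα hfA (by positivity) hs.1.le
      _ = ENNReal.ofReal CA * ∫⁻ s in Ioc (q * t) t, ‖g (t - s)‖ₑ :=
          lintegral_const_mul' _ _ ENNReal.ofReal_ne_top
      _ ≤ ENNReal.ofReal CA :=
          mul_le_of_le_one_right' ((setLIntegral_Ioc_comp_sub_left_le _ _ _).trans hgi)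
  rw [← ENNReal.ofReal_le_ofReal_iff (by positivity), ← Real.enorm_eq_ofReal_abs]
  calc ‖conv f g t‖ₑ ≤ ∫⁻ s in Ioc 0 t, ‖f s‖ₑ * ‖g (t - s)‖ₑ := enorm_conv_le ht.le
    _ = (∫⁻ s in Ioc 0 (q * t), ‖f s‖ₑ * ‖g (t - s)‖ₑ) +
          ∫⁻ s in Ioc (q * t) t, ‖f s‖ₑ * ‖g (t - s)‖ₑ := by
        rw [← Ioc_union_Ioc_eq_Ioc (b := q * t) (by positivity) (by nlinarith),
          lintegral_union measurableSet_Ioc (Ioc_disjoint_Ioc_of_le le_rfl)]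
    _ ≤ ENNReal.ofReal CB + ENNReal.ofReal CA := add_le_add near_zero near_t
    _ = ENNReal.ofReal ((A * q ^ (-α) + B * (1 - q) ^ (-α)) * t ^ (-α)) := by
        rw [← ENNReal.ofReal_add (by positivity) (by positivity)]
        congr 1
        simp only [CA, CB, Real.mul_rpow hq₀.le ht.le, Real.mul_rpow hq₁'.le ht.le]
        ring

end Conv

section IterConv

variable {G : ℕ → ℝ → ℝ} {m : ℕ}

lemma measurable_iterConv (hG : ∀ i ≤ m, Measurable (G i)) : Measurable (iterConv G m) := by
  induction m with
  | zero => exact hG 0 le_rfl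
  | succ m ih => exact measurable_conv (ih fun i hi => hG i (hi.trans m.le_succ)) (hG _ le_rfl)

lemma lintegral_enorm_iterConv_le_one (hG : ∀ i ≤ m, Measurable (G i))
    (hGi : ∀ i ≤ m, ∫⁻ t in Ioi 0, ‖G i t‖ₑ ≤ 1) :
    ∫⁻ t in Ioi 0, ‖iterConv G m t‖ₑ ≤ 1 := by
  induction m with
  | zero => exact hGi 0 le_rfl
  | succ m ih =>
    have hG' : ∀ i ≤ m, Measurable (G i) := fun i hi => hG i (hi.trans m.le_succ)
    calc ∫⁻ t in Ioi 0, ‖iterConv G (m + 1) t‖ₑ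
        ≤ (∫⁻ t in Ioi 0, ‖iterConv G m t‖ₑ) * ∫⁻ t in Ioi 0, ‖G (m + 1) t‖ₑ :=
          lintegral_enorm_conv_le (measurable_iterConv hG') (hG _ le_rfl)
      _ ≤ 1 := mul_le_one' (ih hG' fun i hi => hGi i (hi.trans m.le_succ)) (hGi _ le_rfl)

lemma abs_iterConv_le {α : ℝ} (hα : 0 ≤ α) {K : ℕ → ℝ} (hG : ∀ i ≤ m, Measurable (G i))
    (hGi : ∀ i ≤ m, ∫⁻ t in Ioi 0, ‖G i t‖ₑ ≤ 1)
    (hGK : ∀ i ≤ m, ∀ t, 0 < t → |G i t| ≤ K i * t ^ (-α))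
    {p : ℕ → ℝ} (hp : ∀ i ≤ m, 0 < p i) (hps : ∑ i ∈ Finset.range (m + 1), p i = 1)
    {t : ℝ} (ht : 0 < t) :
    |iterConv G m t| ≤ (∑ i ∈ Finset.range (m + 1), K i * p i ^ (-α)) * t ^ (-α) := by
  induction m generalizing p t with
  | zero =>
    rw [Finset.sum_range_one] at hps
    simpa [iterConv, hps] using hGK 0 le_rfl t ht
  | succ m ih =>
    have le_succ : ∀ {i}, i ≤ m → i ≤ m + 1 := fun hi => hi.trans m.le_succ
    set q := ∑ i ∈ Finset.range (m + 1), p i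
    have hq₀ : 0 < q := Finset.sum_pos (fun i hi => hp i (le_succ (Finset.mem_range_succ_iff.1 hi)))
      Finset.nonempty_range_add_one
    have hq : q + p (m + 1) = 1 := by rwa [Finset.sum_range_succ] at hps
    have hpq : ∀ i ≤ m, 0 < p i / q := fun i hi => div_pos (hp i (le_succ hi)) hq₀
    have hsum : ∑ i ∈ Finset.range (m + 1), p i / q = 1 := by
      rw [← Finset.sum_div, div_self hq₀.ne']
    have hconv := abs_conv_le_of_abs_le_mul_rpow hα hq₀ (by linarith [hp (m + 1) le_rfl]) ht
      (lintegral_enorm_iterConv_le_one (fun i hi => hG i (le_succ hi)) fun i hi => hGi i (le_succ hi))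
      (hGi _ le_rfl)
      (fun s hs => ih (fun i hi => hG i (le_succ hi)) (fun i hi => hGi i (le_succ hi))
        (fun i hi => hGK i (le_succ hi)) hpq hsum hs)
      (hGK _ le_rfl)
    refine hconv.trans_eq ?_
    rw [Finset.sum_range_succ _ (m + 1), Finset.sum_mul, show 1 - q = p (m + 1) by linarith]
    congr 2
    refine Finset.sum_congr rfl fun i hi => ?_
    rw [mul_assoc, ← Real.mul_rpow (hpq i (Finset.mem_range_succ_iff.1 hi)).le hq₀.le,
      div_mul_cancel₀ _ hq₀.ne']

end IterConv

theorem convolution_n_fold_bound_general (α : ℝ) (hα : 0 < α) (n : ℕ)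
    (K : ℕ → ℝ)
    (G : ℕ → ℝ → ℝ) (hm : ∀ i < n, Measurable (G i))
    (hnn : ∀ i < n, ∀ t, 0 ≤ G i t)
    (hint : ∀ i < n, ∫⁻ t in Ioi (0:ℝ), ENNReal.ofReal (G i t) = 1)
    (hb : ∀ i < n, ∀ t, 0 < t → G i t ≤ K i * t ^ (-α)) :
    ∀ p : ℕ → ℝ, (∀ i < n, 0 < p i) → (∑ i ∈ Finset.range n, p i) = 1 →
      ∀ t : ℝ, 0 < t →
        iterConv G (n - 1) t ≤ (∑ i ∈ Finset.range n, K i * p i ^ (-α)) * t ^ (-α) := by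
  intro p hp hps t ht
  obtain ⟨m, rfl⟩ : ∃ m, n = m + 1 :=
    Nat.exists_eq_add_one.2 (Nat.pos_of_ne_zero (by rintro rfl; simp at hps))
  simp only [Nat.lt_add_one_iff, Nat.add_sub_cancel] at hm hnn hint hb hp ⊢
  refine (le_abs_self _).trans
    (abs_iterConv_le hα.le hm (fun i hi => ?_) (fun i hi t ht => ?_) hp hps ht)
  · simp_rw [Real.enorm_of_nonneg (hnn i hi _)]
    exact (hint i hi).le
  · rw [abs_of_nonneg (hnn i hi t)]
    exact hb i hi t ht

/-- Formula (3.50) in the proof of Lemma 3.8: the `n`-fold convolution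
`G₁ ∗ ⋯ ∗ Gₙ` of nonnegative functions vanishing on `(-∞,0)` with integral one and
`Gᵢ t ≤ Kᵢ t^(-α)` satisfies
`(G₁ ∗ ⋯ ∗ Gₙ)(t) ≤ (K₁ p₁^(-α) + ⋯ + Kₙ pₙ^(-α)) t^(-α)` for positive weights `pᵢ`
summing to one. -/
theorem convolution_n_fold_bound (α : ℝ) (hα : 0 < α) (n : ℕ) (hn : 1 ≤ n)
    (K : ℕ → ℝ) (hK : ∀ i < n, 0 ≤ K i)
    (G : ℕ → ℝ → ℝ) (hm : ∀ i < n, Measurable (G i))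
    (hnn : ∀ i < n, ∀ t, 0 ≤ G i t)
    (hz : ∀ i < n, ∀ t < (0:ℝ), G i t = 0)
    (hint : ∀ i < n, ∫⁻ t in Ioi (0:ℝ), ENNReal.ofReal (G i t) = 1)
    (hb : ∀ i < n, ∀ t, 0 < t → G i t ≤ K i * t ^ (-α)) :
    ∀ p : ℕ → ℝ, (∀ i < n, 0 < p i) → (∑ i ∈ Finset.range n, p i) = 1 →
      ∀ t : ℝ, 0 < t →
        iterConv G (n - 1) t ≤ (∑ i ∈ Finset.range n, K i * p i ^ (-α)) * t ^ (-α) :=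
  convolution_n_fold_bound_general α hα n K G hm hnn hint hb
end
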